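/- Let N ≥ 2 and let (w¹, P¹) (with K₁ ≥ 1 cells) and (w², P²) (with K₂ ≥ 1 cells) be two configurations on the same N classes, with confidences e₁ and e₂ and Gini index impurities I₁ and I₂ respectively. If e₁ ≥ e₂, then I₁ ≤ 2·I₂. (Paper's Theorem 8: since Algorithm 1's output maximizes the confidence, it is a 2-approximation for Gini impurity minimization.) -/

import Mathlib

/-!
In a single cell with class distribution `p` and largest mass `m`, the Gini impurity
`1 - ∑ pᵢ²` is squeezed between `1 - m` (as `∑ pᵢ² ≤ m ∑ pᵢ = m`) and
`1 - m² ≤ 2 (1 - m)`. Averaging over the cells, impurity lies between `1 - e` and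
`2 (1 - e)`, so larger confidence `e₁ ≥ e₂` gives `I₁ ≤ 2 (1 - e₁) ≤ 2 (1 - e₂) ≤ 2 I₂`.
-/

open Finset

/-- The maximum of a real-valued vector over the finite index set `Fin N` (`N > 0`). -/
noncomputable def colMax {N : ℕ} (hN : 0 < N) (v : Fin N → ℝ) : ℝ :=
  Finset.univ.sup' (Finset.univ_nonempty_iff.mpr ⟨⟨0, hN⟩⟩) v

section Cell

variable {ι : Type*} [Fintype ι]

lemma sum_mul_one_sub_eq_one_sub_sum_sq (p : ι → ℝ) (hs : ∑ i, p i = 1) :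
    ∑ i, p i * (1 - p i) = 1 - ∑ i, p i ^ 2 := by
  simp only [mul_one_sub, sum_sub_distrib, hs, sq]

lemma sum_mul_one_sub_le_two_mul_one_sub (p : ι → ℝ) (hs : ∑ i, p i = 1) (j : ι) :
    ∑ i, p i * (1 - p i) ≤ 2 * (1 - p j) := by
  have hsq : p j ^ 2 ≤ ∑ i, p i ^ 2 :=
    single_le_sum (fun i _ => sq_nonneg (p i)) (mem_univ j)
  rw [sum_mul_one_sub_eq_one_sub_sum_sq p hs]
  nlinarith [sq_nonneg (1 - p j)]

lemma one_sub_le_sum_mul_one_sub (p : ι → ℝ) (hp : ∀ i, 0 ≤ p i) (hs : ∑ i, p i = 1)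
    {m : ℝ} (hm : ∀ i, p i ≤ m) : 1 - m ≤ ∑ i, p i * (1 - p i) := by
  have hsq : ∑ i, p i ^ 2 ≤ m :=
    calc ∑ i, p i ^ 2 ≤ ∑ i, m * p i :=
          sum_le_sum fun i _ => by rw [sq]; exact mul_le_mul_of_nonneg_right (hm i) (hp i)
      _ = m := by rw [← mul_sum, hs, mul_one]
  rw [sum_mul_one_sub_eq_one_sub_sum_sq p hs]
  linarith

end Cell

section Configuration

variable {κ ι : Type*} [Fintype κ] [Fintype ι]

lemma sum_mul_one_sub_eq_one_sub_sum_mul (w : κ → ℝ) (hws : ∑ k, w k = 1) (g : κ → ℝ) :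
    ∑ k, w k * (1 - g k) = 1 - ∑ k, w k * g k := by
  simp only [mul_one_sub, sum_sub_distrib, hws]

lemma impurity_le_two_mul_one_sub_confidence (h : (univ : Finset ι).Nonempty)
    (w : κ → ℝ) (hw : ∀ k, 0 ≤ w k) (hws : ∑ k, w k = 1)
    (P : κ → ι → ℝ) (hPs : ∀ k, ∑ i, P k i = 1) :
    ∑ k, ∑ i, w k * (P k i * (1 - P k i)) ≤ 2 * (1 - ∑ k, w k * univ.sup' h (P k)) := by
  have hcell (k : κ) : ∑ i, P k i * (1 - P k i) ≤ 2 * (1 - univ.sup' h (P k)) := by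
    obtain ⟨j, -, hj⟩ := exists_mem_eq_sup' h (P k)
    exact hj ▸ sum_mul_one_sub_le_two_mul_one_sub (P k) (hPs k) j
  calc ∑ k, ∑ i, w k * (P k i * (1 - P k i))
      = ∑ k, w k * ∑ i, P k i * (1 - P k i) := by simp only [mul_sum]
    _ ≤ ∑ k, w k * (2 * (1 - univ.sup' h (P k))) :=
        sum_le_sum fun k _ => mul_le_mul_of_nonneg_left (hcell k) (hw k)
    _ = 2 * (1 - ∑ k, w k * univ.sup' h (P k)) := by
        rw [← sum_mul_one_sub_eq_one_sub_sum_mul w hws, mul_sum]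
        exact sum_congr rfl fun k _ => by ring

lemma one_sub_confidence_le_impurity (h : (univ : Finset ι).Nonempty)
    (w : κ → ℝ) (hw : ∀ k, 0 ≤ w k) (hws : ∑ k, w k = 1)
    (P : κ → ι → ℝ) (hP : ∀ k i, 0 ≤ P k i) (hPs : ∀ k, ∑ i, P k i = 1) :
    1 - ∑ k, w k * univ.sup' h (P k) ≤ ∑ k, ∑ i, w k * (P k i * (1 - P k i)) := by
  have hcell (k : κ) : 1 - univ.sup' h (P k) ≤ ∑ i, P k i * (1 - P k i) :=
    one_sub_le_sum_mul_one_sub (P k) (hP k) (hPs k) fun i => le_sup' (P k) (mem_univ i)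
  calc 1 - ∑ k, w k * univ.sup' h (P k)
      = ∑ k, w k * (1 - univ.sup' h (P k)) := (sum_mul_one_sub_eq_one_sub_sum_mul w hws _).symm
    _ ≤ ∑ k, w k * ∑ i, P k i * (1 - P k i) :=
        sum_le_sum fun k _ => mul_le_mul_of_nonneg_left (hcell k) (hw k)
    _ = ∑ k, ∑ i, w k * (P k i * (1 - P k i)) := by simp only [mul_sum]

end Configuration

/-- Paper's Theorem 8 (2-approximation for Gini impurity): if one configuration has
confidence at least that of another, its Gini impurity is at most twice the other's. -/
theorem gini_two_approximation (N K₁ K₂ : ℕ) (hN : 2 ≤ N)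
    (w₁ : Fin K₁ → ℝ) (hw₁ : ∀ k, 0 ≤ w₁ k) (hws₁ : ∑ k, w₁ k = 1)
    (P₁ : Fin K₁ → Fin N → ℝ) (hPs₁ : ∀ k, ∑ i, P₁ k i = 1)
    (w₂ : Fin K₂ → ℝ) (hw₂ : ∀ k, 0 ≤ w₂ k) (hws₂ : ∑ k, w₂ k = 1)
    (P₂ : Fin K₂ → Fin N → ℝ) (hP₂ : ∀ k i, 0 ≤ P₂ k i) (hPs₂ : ∀ k, ∑ i, P₂ k i = 1)
    (e₁ e₂ : ℝ)
    (he₁ : e₁ = ∑ k, w₁ k * colMax (by omega) (P₁ k))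
    (he₂ : e₂ = ∑ k, w₂ k * colMax (by omega) (P₂ k))
    (hee : e₂ ≤ e₁) :
    ∑ k, ∑ i, w₁ k * (P₁ k i * (1 - P₁ k i)) ≤
      2 * ∑ k, ∑ i, w₂ k * (P₂ k i * (1 - P₂ k i)) := by
  have h := univ_nonempty_iff.mpr ⟨(⟨0, by omega⟩ : Fin N)⟩
  have h₁ : ∑ k, ∑ i, w₁ k * (P₁ k i * (1 - P₁ k i)) ≤ 2 * (1 - e₁) :=
    he₁ ▸ impurity_le_two_mul_one_sub_confidence h w₁ hw₁ hws₁ P₁ hPs₁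
  have h₂ : 1 - e₂ ≤ ∑ k, ∑ i, w₂ k * (P₂ k i * (1 - P₂ k i)) :=
    he₂ ▸ one_sub_confidence_le_impurity h w₂ hw₂ hws₂ P₂ hP₂ hPs₂
  linarith
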